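/- arXiv:2309.02390 — 6 statements merged into one kernel-verified Lean document; each statement's English description precedes it below -/
import Mathlib

section
/- Suppose the classifier f has perfect accuracy on the training dataset D, i.e. for every (x, y*) ∈ D and every label y ≠ y*, f(x, y*) > f(x, y). Then for every real c > 1, the softmax cross-entropy loss satisfies L(c·f) < L(f). -/
open Real

lemma per_example_lt {Y : Type*} [Fintype Y] (hY : 1 < Fintype.card Y)
    (g : Y → ℝ) (y0 : Y) (h : ∀ y : Y, y ≠ y0 → g y0 > g y) (c : ℝ) (hc : 1 < c) :
    Real.log (Real.exp (g y0) / ∑ y : Y, Real.exp (g y)) <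
      Real.log (Real.exp (c * g y0) / ∑ y : Y, Real.exp (c * g y)) := by
  have hA : (0:ℝ) < ∑ y : Y, Real.exp (c * g y) :=
    Finset.sum_pos (fun y _ => Real.exp_pos _) ⟨y0, Finset.mem_univ y0⟩
  have hB : (0:ℝ) < ∑ y : Y, Real.exp (g y) :=
    Finset.sum_pos (fun y _ => Real.exp_pos _) ⟨y0, Finset.mem_univ y0⟩
  obtain ⟨y1, hy1⟩ := Fintype.exists_ne_of_one_lt_card hY y0
  have key : (∑ y : Y, Real.exp (c * g y)) * Real.exp (g y0)
      < (∑ y : Y, Real.exp (g y)) * Real.exp (c * g y0) := by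
    rw [Finset.sum_mul, Finset.sum_mul]
    apply Finset.sum_lt_sum
    · intro y _
      rw [← Real.exp_add, ← Real.exp_add]
      apply Real.exp_le_exp.2
      rcases eq_or_ne y y0 with rfl | hne
      · ring_nf; exact le_refl _
      · nlinarith [h y hne, (h y hne).le]
    · refine ⟨y1, Finset.mem_univ y1, ?_⟩
      rw [← Real.exp_add, ← Real.exp_add]
      apply Real.exp_lt_exp.2
      nlinarith [h y1 hy1]
  have hlog := Real.log_lt_log (by positivity) key
  rw [Real.log_mul (ne_of_gt hA) (Real.exp_ne_zero _),
      Real.log_mul (ne_of_gt hB) (Real.exp_ne_zero _), Real.log_exp, Real.log_exp] at hlog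
  rw [Real.log_div (Real.exp_ne_zero _) (ne_of_gt hB),
      Real.log_div (Real.exp_ne_zero _) (ne_of_gt hA), Real.log_exp, Real.log_exp]
  linarith

lemma list_sum_lt {α : Type*} (l : List α) (hl : l ≠ []) (F G : α → ℝ)
    (h : ∀ a ∈ l, F a < G a) : (l.map F).sum < (l.map G).sum := by
  induction l with
  | nil => exact absurd rfl hl
  | cons a t ih =>
    rcases eq_or_ne t [] with rfl | ht
    · simpa using h a (by simp)
    · have := ih ht (fun b hb => h b (List.mem_cons_of_mem _ hb))
      have ha := h a List.mem_cons_self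
      simp only [List.map_cons, List.sum_cons]
      linarith

/-- If a classifier `f` has perfect accuracy on the (nonempty) training
dataset `D` (for every `(x, y*) ∈ D` and every label `y ≠ y*`, `f (x, y*) > f (x, y)`),
then for every `c > 1` the softmax cross-entropy loss of the rescaled classifier `c • f`
is strictly smaller than that of `f`. -/
theorem scaling_logits_decreases_loss
    {X Y : Type*} [Fintype Y] (hY : 1 < Fintype.card Y)
    (D : List (X × Y)) (hD : D ≠ [])
    (f : X × Y → ℝ)
    (hacc : ∀ p ∈ D, ∀ y : Y, y ≠ p.2 → f (p.1, p.2) > f (p.1, y))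
    (c : ℝ) (hc : 1 < c) :
    -(1 / (D.length : ℝ)) *
        (D.map (fun p =>
          Real.log (Real.exp (c * f (p.1, p.2)) / ∑ y : Y, Real.exp (c * f (p.1, y))))).sum
      <
    -(1 / (D.length : ℝ)) *
        (D.map (fun p =>
          Real.log (Real.exp (f (p.1, p.2)) / ∑ y : Y, Real.exp (f (p.1, y))))).sum := by
  have hsum : (D.map (fun p =>
          Real.log (Real.exp (f (p.1, p.2)) / ∑ y : Y, Real.exp (f (p.1, y))))).sum
      < (D.map (fun p =>
          Real.log (Real.exp (c * f (p.1, p.2)) / ∑ y : Y, Real.exp (c * f (p.1, y))))).sum := by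
    apply list_sum_lt D hD
    intro p hp
    exact per_example_lt hY (fun y => f (p.1, y)) p.2 (hacc p hp) c hc
  have hlen : (0:ℝ) < 1 / (D.length : ℝ) := by
    have : 0 < D.length := List.length_pos_iff.2 hD
    positivity
  nlinarith
end

section
/- Suppose the scaling exponent satisfies k ≥ q. Then every global minimizer w* of the overall loss L over the nonnegative orthant satisfies w*_j = 0 for every index j such that A_j > min_{i} A_i. In other words, at any global minimum all weight is allocated exclusively to circuits of minimal parameter norm. -/
open Real

/-!
Moving all the weight of an inefficient circuit `j` onto a circuit `i` of minimal norm keeps the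
total weight, hence the training loss, unchanged. Since `(w ^ (1/k) * A) ^ q = w ^ (q/k) * A ^ q`
and `t ↦ t ^ (q/k)` is subadditive for `q ≤ k`, the penalty then drops by at least
`w j ^ (q/k) * (A j ^ q - A i ^ q) > 0`, contradicting minimality unless `w j = 0`.
-/

section TransferWeight

variable {ι : Type*} [DecidableEq ι]

theorem Finset.sum_apply_update_add [Fintype ι] {M : Type*} [AddCommMonoid M] {α : Type*}
    (g : ι → α → M) (w : ι → α) (i : ι) (x : α) :
    ∑ l, g l (Function.update w i x l) + g i (w i) = ∑ l, g l (w l) + g i x := by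
  simp_rw [Function.apply_update g]
  rw [Finset.sum_update_of_mem (Finset.mem_univ i), Finset.sdiff_singleton_eq_erase,
    ← Finset.sum_erase_add _ _ (Finset.mem_univ i)]
  abel

def transferWeight (w : ι → ℝ) (i j : ι) : ι → ℝ :=
  Function.update (Function.update w j 0) i (w i + w j)

theorem transferWeight_nonneg {w : ι → ℝ} (hw : ∀ l, 0 ≤ w l) (i j : ι) (l : ι) :
    0 ≤ transferWeight w i j l := by
  unfold transferWeight
  rcases eq_or_ne l i with rfl | hli
  · simpa using add_nonneg (hw l) (hw j)
  rcases eq_or_ne l j with rfl | hlj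
  · simp [hli]
  · simpa [hli, hlj] using hw l

theorem sum_apply_transferWeight_add [Fintype ι] {M : Type*} [AddCommMonoid M]
    (g : ι → ℝ → M) (w : ι → ℝ) {i j : ι} (hij : i ≠ j) :
    ∑ l, g l (transferWeight w i j l) + g i (w i) + g j (w j) =
      ∑ l, g l (w l) + g i (w i + w j) + g j 0 := by
  have hi := Finset.sum_apply_update_add g (Function.update w j 0) i (w i + w j)
  have hj := Finset.sum_apply_update_add g w j 0
  rw [Function.update_of_ne hij] at hi
  rw [transferWeight, hi, add_right_comm, hj, add_right_comm]

theorem sum_transferWeight [Fintype ι] (w : ι → ℝ) {i j : ι} (hij : i ≠ j) :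
    ∑ l, transferWeight w i j l = ∑ l, w l := by
  linarith [sum_apply_transferWeight_add (fun _ x ↦ x) w hij]

end TransferWeight

theorem one_div_rpow_mul_rpow {x a : ℝ} (hx : 0 ≤ x) (ha : 0 ≤ a) (k q : ℝ) :
    (x ^ (1 / k) * a) ^ q = x ^ (q / k) * a ^ q := by
  rw [mul_rpow (rpow_nonneg hx _) ha, ← rpow_mul hx, one_div_mul_eq_div]

theorem add_rpow_mul_lt_of_lt {p x y a b : ℝ} (hp0 : 0 ≤ p) (hp1 : p ≤ 1) (hx : 0 ≤ x)
    (hy : 0 < y) (ha : 0 ≤ a) (hab : a < b) :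
    (x + y) ^ p * a < x ^ p * a + y ^ p * b :=
  calc (x + y) ^ p * a ≤ (x ^ p + y ^ p) * a :=
        mul_le_mul_of_nonneg_right (rpow_add_le_add_rpow hx hy.le hp0 hp1) ha
    _ = x ^ p * a + y ^ p * a := add_mul _ _ _
    _ < x ^ p * a + y ^ p * b := by gcongr

theorem penalty_transferWeight_lt {ι : Type*} [Fintype ι] [DecidableEq ι] {A : ι → ℝ}
    (hA : ∀ l, 0 ≤ A l) {q k : ℝ} (hq : 0 < q) (hkq : q ≤ k) {w : ι → ℝ}
    (hw : ∀ l, 0 ≤ w l) {i j : ι} (hAij : A i < A j) (hwj : 0 < w j) :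
    ∑ l, (transferWeight w i j l ^ (1 / k) * A l) ^ q < ∑ l, (w l ^ (1 / k) * A l) ^ q := by
  have hk : 0 < k := hq.trans_le hkq
  have hsplit := sum_apply_transferWeight_add (fun l x ↦ (x ^ (1 / k) * A l) ^ q) w
    (ne_of_apply_ne A hAij.ne)
  rw [zero_rpow (one_div_ne_zero hk.ne'), zero_mul, zero_rpow hq.ne',
    one_div_rpow_mul_rpow (add_nonneg (hw i) (hw j)) (hA i),
    one_div_rpow_mul_rpow (hw i) (hA i), one_div_rpow_mul_rpow (hw j) (hA j)] at hsplit
  have hmove := add_rpow_mul_lt_of_lt (div_nonneg hq.le hk.le) ((div_le_one hk).2 hkq) (hw i) hwj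
    (rpow_nonneg (hA i) q) (rpow_lt_rpow (hA i) hAij hq)
  linarith

theorem weight_zero_on_inefficient_circuits_general
    {n : ℕ} (A : Fin n → ℝ) (hA : ∀ i, 0 < A i)
    (lam q k : ℝ) (hlam : 0 < lam) (hq : 0 < q) (hkq : q ≤ k)
    (T : ℝ → ℝ)
    (w : Fin n → ℝ) (hw : ∀ i, 0 ≤ w i)
    (hmin : ∀ v : Fin n → ℝ, (∀ i, 0 ≤ v i) →
      T (∑ i, w i) + (lam / q) * ∑ i, ((w i) ^ (1 / k) * A i) ^ q ≤
        T (∑ i, v i) + (lam / q) * ∑ i, ((v i) ^ (1 / k) * A i) ^ q)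
    (j : Fin n) (hj : Finset.univ.inf' ⟨j, Finset.mem_univ j⟩ A < A j) :
    w j = 0 := by
  by_contra hwj
  obtain ⟨i, -, hi⟩ := Finset.exists_mem_eq_inf' ⟨j, Finset.mem_univ j⟩ A
  rw [hi] at hj
  have hdrop := penalty_transferWeight_lt (fun l ↦ (hA l).le) hq hkq hw hj ((hw j).lt_of_ne' hwj)
  have hle := hmin _ (transferWeight_nonneg hw i j)
  rw [sum_transferWeight w (ne_of_apply_ne A hj.ne)] at hle
  have := mul_lt_mul_of_pos_left hdrop (div_pos hlam hq)
  linarith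

/-- (Case 1 of the efficiency theorem.) For `n ≥ 1` circuits with
parameter norms `A i > 0`, weight-decay coefficient `lam > 0`, norm exponent `q > 0`,
and scaling exponent `k ≥ q`, any global minimizer `w` over the nonnegative orthant of
the overall loss `L w = T (∑ i, w i) + (lam / q) * ∑ i, ((w i)^(1/k) * A i)^q`
satisfies `w j = 0` for every `j` with `A j > min_i A i`. -/
theorem weight_zero_on_inefficient_circuits
    {n : ℕ} (hn : 1 ≤ n) (A : Fin n → ℝ) (hA : ∀ i, 0 < A i)
    (lam q k : ℝ) (hlam : 0 < lam) (hq : 0 < q) (hk : 0 < k) (hkq : q ≤ k)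
    (T : ℝ → ℝ)
    (w : Fin n → ℝ) (hw : ∀ i, 0 ≤ w i)
    (hmin : ∀ v : Fin n → ℝ, (∀ i, 0 ≤ v i) →
      T (∑ i, w i) + (lam / q) * ∑ i, ((w i) ^ (1 / k) * A i) ^ q ≤
        T (∑ i, v i) + (lam / q) * ∑ i, ((v i) ^ (1 / k) * A i) ^ q)
    (j : Fin n) (hj : Finset.univ.inf' ⟨j, Finset.mem_univ j⟩ A < A j) :
    w j = 0 :=
  weight_zero_on_inefficient_circuits_general A hA lam q k hlam hq hkq T w hw hmin j hj
end

section
/- Suppose 0 < k < q, and suppose T is differentiable. Then every global minimizer w* of the overall loss L over the nonnegative orthant with w* ≠ 0 satisfies: there exists a constant C > 0 such that w*_i = C · A_i^{−qk/(q−k)} for every i = 1, …, n. In particular, the minimizing weights are proportional to A_i^{−qk/(q−k)}, so every circuit receives strictly positive weight and more efficient circuits (smaller A_i) receive strictly larger weight. -/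
open Real

/-- Tangent line inequality for `x ↦ x ^ r`, strict version. -/
lemma tangent_lt_rpow {r x y : ℝ} (hr : 1 < r) (hx : 0 ≤ x) (hy : 0 < y) (hxy : x ≠ y) :
    y ^ r + r * y ^ (r - 1) * (x - y) < x ^ r := by
  have hs : -1 ≤ x / y - 1 := by
    have := div_nonneg hx hy.le; linarith
  have hs' : x / y - 1 ≠ 0 := by
    intro h
    apply hxy
    have : x / y = 1 := by linarith
    field_simp at this
    linarith
  have h := one_add_mul_self_lt_rpow_one_add hs hs' hr
  have h1 : (1 : ℝ) + (x / y - 1) = x / y := by ring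
  rw [h1, Real.div_rpow hx hy.le] at h
  have hyr : (0 : ℝ) < y ^ r := Real.rpow_pos_of_pos hy r
  have hkey := mul_lt_mul_of_pos_right h hyr
  rw [div_mul_cancel₀ _ hyr.ne'] at hkey
  have hsub : y ^ (r - 1) = y ^ r / y := by
    rw [Real.rpow_sub hy, Real.rpow_one]
  calc y ^ r + r * y ^ (r - 1) * (x - y)
      = (1 + r * (x / y - 1)) * y ^ r := by
        rw [hsub]; field_simp
    _ < x ^ r := hkey

/-- Tangent line inequality for `x ↦ x ^ r`, non-strict version. -/
lemma tangent_le_rpow {r x y : ℝ} (hr : 1 < r) (hx : 0 ≤ x) (hy : 0 < y) :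
    y ^ r + r * y ^ (r - 1) * (x - y) ≤ x ^ r := by
  rcases eq_or_ne x y with rfl | hxy
  · simp
  · exact (tangent_lt_rpow hr hx hy hxy).le

/-- (Case 2 of the efficiency theorem.) For `n ≥ 1` circuits with
parameter norms `A i > 0`, weight-decay coefficient `lam > 0`, exponents `0 < k < q`,
and a differentiable training loss `T`, any nonzero global minimizer `w` over the
nonnegative orthant of the overall loss
`L w = T (∑ i, w i) + (lam / q) * ∑ i, ((w i)^(1/k) * A i)^q`
satisfies `w i = C * (A i)^(−qk/(q−k))` for some constant `C > 0`. -/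
theorem minimizer_weights_proportional
    {n : ℕ} (hn : 1 ≤ n) (A : Fin n → ℝ) (hA : ∀ i, 0 < A i)
    (lam q k : ℝ) (hlam : 0 < lam) (hk : 0 < k) (hkq : k < q)
    (T : ℝ → ℝ) (hT : Differentiable ℝ T)
    (w : Fin n → ℝ) (hw : ∀ i, 0 ≤ w i) (hw0 : w ≠ 0)
    (hmin : ∀ v : Fin n → ℝ, (∀ i, 0 ≤ v i) →
      T (∑ i, w i) + (lam / q) * ∑ i, ((w i) ^ (1 / k) * A i) ^ q ≤
        T (∑ i, v i) + (lam / q) * ∑ i, ((v i) ^ (1 / k) * A i) ^ q) :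
    ∃ C : ℝ, 0 < C ∧ ∀ i, w i = C * (A i) ^ (-(q * k) / (q - k)) := by
  have hq : 0 < q := hk.trans hkq
  have hqk : 0 < q - k := by linarith
  have hinst : Nonempty (Fin n) := Fin.pos_iff_nonempty.mp hn
  have hne : (Finset.univ : Finset (Fin n)).Nonempty := Finset.univ_nonempty
  set S := ∑ i, w i with hS_def
  have hS : 0 < S := by
    obtain ⟨j, hj⟩ := Function.ne_iff.mp hw0
    exact Finset.sum_pos' (fun i _ => hw i)
      ⟨j, Finset.mem_univ j, lt_of_le_of_ne (hw j) (Ne.symm hj)⟩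
  set e : ℝ := -(q * k) / (q - k) with he_def
  set b : Fin n → ℝ := fun i => (A i) ^ e with hb_def
  have hbpos : ∀ i, 0 < b i := fun i => Real.rpow_pos_of_pos (hA i) e
  set B := ∑ i, b i with hB_def
  have hB : 0 < B := Finset.sum_pos (fun i _ => hbpos i) hne
  set C := S / B with hC_def
  have hCpos : 0 < C := div_pos hS hB
  refine ⟨C, hCpos, ?_⟩
  set r : ℝ := q / k with hr_def
  have hr : 1 < r := (one_lt_div hk).mpr hkq
  set v : Fin n → ℝ := fun i => C * b i with hv_def
  have hvpos : ∀ i, 0 < v i := fun i => mul_pos hCpos (hbpos i)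
  have hvsum : ∑ i, v i = S := by
    rw [hv_def]
    simp only
    rw [← Finset.mul_sum, ← hB_def, hC_def]
    field_simp
  -- penalty rewrite
  have hpen : ∀ (x : ℝ), 0 ≤ x → ∀ i, (x ^ (1 / k) * A i) ^ q = (A i) ^ q * x ^ r := by
    intro x hx i
    rw [Real.mul_rpow (Real.rpow_nonneg hx _) (hA i).le, ← Real.rpow_mul hx]
    rw [one_div, inv_mul_eq_div, ← hr_def, mul_comm]
  -- constant gradient at v
  have hgrad : ∀ i, (A i) ^ q * (v i) ^ (r - 1) = C ^ (r - 1) := by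
    intro i
    have hb1 : (b i) ^ (r - 1) = (A i) ^ (-q) := by
      rw [hb_def]
      simp only
      rw [← Real.rpow_mul (hA i).le]
      congr 1
      rw [he_def, hr_def]
      field_simp
    rw [hv_def]
    simp only
    rw [Real.mul_rpow hCpos.le (hbpos i).le, hb1, ← mul_assoc, mul_comm ((A i) ^ q),
      mul_assoc, ← Real.rpow_add (hA i), add_neg_cancel, Real.rpow_zero, mul_one]
  -- value at v
  have hval : ∀ i, (A i) ^ q * (v i) ^ r = C ^ (r - 1) * v i := by
    intro i
    have : (v i) ^ r = (v i) ^ (r - 1) * v i := by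
      rw [← Real.rpow_add_one (hvpos i).ne']
      ring_nf
    rw [this, ← mul_assoc, hgrad i]
  -- from minimality: F w ≤ F v where F u = ∑ A_i^q u_i^r
  have hFwv : ∑ i, (A i) ^ q * (w i) ^ r ≤ ∑ i, (A i) ^ q * (v i) ^ r := by
    have h := hmin v (fun i => (hvpos i).le)
    rw [hvsum] at h
    have h2 : ∑ i, ((w i) ^ (1 / k) * A i) ^ q ≤ ∑ i, ((v i) ^ (1 / k) * A i) ^ q := by
      have hlq : 0 < lam / q := div_pos hlam hq
      nlinarith [h]
    calc ∑ i, (A i) ^ q * (w i) ^ r = ∑ i, ((w i) ^ (1 / k) * A i) ^ q := by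
          refine Finset.sum_congr rfl fun i _ => ?_
          rw [hpen (w i) (hw i) i]
      _ ≤ ∑ i, ((v i) ^ (1 / k) * A i) ^ q := h2
      _ = ∑ i, (A i) ^ q * (v i) ^ r := by
          refine Finset.sum_congr rfl fun i _ => ?_
          rw [hpen (v i) (hvpos i).le i]
  -- now show w = v
  by_contra hcon
  push_neg at hcon
  obtain ⟨j, hj⟩ := hcon
  have hj' : w j ≠ v j := hj
  have hstrict : ∑ i, ((A i) ^ q * (v i) ^ r + r * C ^ (r - 1) * (w i - v i)) <
      ∑ i, (A i) ^ q * (w i) ^ r := by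
    apply Finset.sum_lt_sum
    · intro i _
      have h := tangent_le_rpow hr (hw i) (hvpos i)
      have h' := mul_le_mul_of_nonneg_left h (Real.rpow_pos_of_pos (hA i) q).le
      calc (A i) ^ q * (v i) ^ r + r * C ^ (r - 1) * (w i - v i)
          = (A i) ^ q * ((v i) ^ r + r * (v i) ^ (r - 1) * (w i - v i)) := by
            rw [← hgrad i]; ring
        _ ≤ (A i) ^ q * (w i) ^ r := h'
    · refine ⟨j, Finset.mem_univ j, ?_⟩
      have h := tangent_lt_rpow hr (hw j) (hvpos j) hj'
      have h' := mul_lt_mul_of_pos_left h (Real.rpow_pos_of_pos (hA j) q)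
      calc (A j) ^ q * (v j) ^ r + r * C ^ (r - 1) * (w j - v j)
          = (A j) ^ q * ((v j) ^ r + r * (v j) ^ (r - 1) * (w j - v j)) := by
            rw [← hgrad j]; ring
        _ < (A j) ^ q * (w j) ^ r := h'
  have hsum0 : ∑ i, ((A i) ^ q * (v i) ^ r + r * C ^ (r - 1) * (w i - v i)) =
      ∑ i, (A i) ^ q * (v i) ^ r := by
    rw [Finset.sum_add_distrib, ← Finset.mul_sum, Finset.sum_sub_distrib, ← hS_def, hvsum,
      sub_self, mul_zero, add_zero]
  rw [hsum0] at hstrict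
  linarith
end

section
/- Suppose 0 < k < q. Then every global minimizer w* of the overall loss L over the nonnegative orthant with w* ≠ 0 satisfies w*_i > 0 for every i = 1, …, n; that is, at a nonzero global minimum no weight is exactly zero. -/
open Real

private lemma sum_update_update {n : ℕ} (f : Fin n → ℝ) {j m : Fin n} (hjm : j ≠ m)
    (a b : ℝ) :
    ∑ i, Function.update (Function.update f m b) j a i
      = ∑ i, f i - f j - f m + a + b := by
  rw [Finset.sum_update_of_mem (Finset.mem_univ j), ← Finset.erase_eq,
    Finset.sum_update_of_mem (Finset.mem_erase.mpr ⟨hjm.symm, Finset.mem_univ m⟩),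
    ← Finset.erase_eq,
    Finset.sum_erase_eq_sub (Finset.mem_erase.mpr ⟨hjm.symm, Finset.mem_univ m⟩),
    Finset.sum_erase_eq_sub (Finset.mem_univ j)]
  ring

/-- For `n ≥ 1` circuits with parameter norms `A i > 0`, weight-decay
coefficient `lam > 0`, exponents `0 < k < q`, any nonzero global minimizer `w` over the
nonnegative orthant of the overall loss
`L w = T (∑ i, w i) + (lam / q) * ∑ i, ((w i)^(1/k) * A i)^q`
has all coordinates strictly positive. -/
theorem minimizer_weights_all_positive
    {n : ℕ} (hn : 1 ≤ n) (A : Fin n → ℝ) (hA : ∀ i, 0 < A i)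
    (lam q k : ℝ) (hlam : 0 < lam) (hk : 0 < k) (hkq : k < q)
    (T : ℝ → ℝ)
    (w : Fin n → ℝ) (hw : ∀ i, 0 ≤ w i) (hw0 : w ≠ 0)
    (hmin : ∀ v : Fin n → ℝ, (∀ i, 0 ≤ v i) →
      T (∑ i, w i) + (lam / q) * ∑ i, ((w i) ^ (1 / k) * A i) ^ q ≤
        T (∑ i, v i) + (lam / q) * ∑ i, ((v i) ^ (1 / k) * A i) ^ q) :
    ∀ i, 0 < w i := by
  intro i
  by_contra hpos
  have hwi : w i = 0 := le_antisymm (not_lt.mp hpos) (hw i)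
  obtain ⟨m, hm⟩ := Function.ne_iff.mp hw0
  have hwm : 0 < w m := lt_of_le_of_ne (hw m) (Ne.symm hm)
  have him : i ≠ m := by rintro rfl; exact hm hwi
  have hq : 0 < q := hk.trans hkq
  set p := q / k with hpdef
  have hp1 : 1 < p := (one_lt_div hk).mpr hkq
  have hp0 : 0 < p - 1 := by linarith
  have hAq : ∀ l, 0 < A l ^ q := fun l => Real.rpow_pos_of_pos (hA l) q
  have hterm : ∀ (l : Fin n) (x : ℝ), 0 ≤ x →
      (x ^ (1/k) * A l) ^ q = x ^ p * A l ^ q := by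
    intro l x hx
    rw [Real.mul_rpow (Real.rpow_nonneg hx _) (hA l).le, ← Real.rpow_mul hx,
      one_div_mul_eq_div]
  set c := w m ^ (p-1) * A m ^ q / A i ^ q with hc
  have hc0 : 0 < c := div_pos (mul_pos (Real.rpow_pos_of_pos hwm _) (hAq m)) (hAq i)
  set δ := c ^ (1/(p-1)) with hδ
  have hδ0 : 0 < δ := Real.rpow_pos_of_pos hc0 _
  set ε := min (w m) δ / 2 with hε
  have hmin0 : 0 < min (w m) δ := lt_min hwm hδ0
  have hε0 : 0 < ε := half_pos hmin0
  have hεm : ε < w m := lt_of_lt_of_le (half_lt_self hmin0) (min_le_left _ _)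
  have hεδ : ε < δ := lt_of_lt_of_le (half_lt_self hmin0) (min_le_right _ _)
  have hεc : ε ^ (p-1) < c := by
    calc ε ^ (p-1) < δ ^ (p-1) := Real.rpow_lt_rpow hε0.le hεδ hp0
      _ = c := by
        rw [hδ, ← Real.rpow_mul hc0.le, one_div_mul_cancel hp0.ne', Real.rpow_one]
  have hws : w m ^ (p-1) * w m = w m ^ p := by
    rw [Real.rpow_sub hwm, Real.rpow_one]; field_simp
  have key : ε ^ p * A i ^ q + (w m - ε) ^ p * A m ^ q < w m ^ p * A m ^ q := by
    have hb : (w m - ε) ^ p ≤ w m ^ (p-1) * (w m - ε) := by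
      have hwε : (0:ℝ) < w m - ε := by linarith
      have ht0 : 0 < (w m - ε)/w m := div_pos hwε hwm
      have ht1 : (w m - ε)/w m ≤ 1 := by rw [div_le_one hwm]; linarith
      have htp : ((w m - ε)/w m) ^ p ≤ ((w m - ε)/w m) ^ (1:ℝ) :=
        Real.rpow_le_rpow_of_exponent_ge ht0 ht1 hp1.le
      rw [Real.rpow_one] at htp
      have hwmp : (0:ℝ) < w m ^ p := Real.rpow_pos_of_pos hwm p
      calc (w m - ε) ^ p = ((w m - ε)/w m) ^ p * w m ^ p := by
            rw [Real.div_rpow hwε.le hwm.le]; field_simp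
        _ ≤ ((w m - ε)/w m) * w m ^ p :=
            mul_le_mul_of_nonneg_right htp hwmp.le
        _ = w m ^ (p-1) * (w m - ε) := by
            rw [← hws]; field_simp
    have h2 : ε ^ p * A i ^ q < ε * (w m ^ (p-1) * A m ^ q) := by
      have hsplit : ε ^ p = ε ^ (p-1) * ε := by
        rw [← Real.rpow_add_one hε0.ne']; ring_nf
      rw [hsplit]
      have : ε ^ (p-1) * A i ^ q < w m ^ (p-1) * A m ^ q := by
        rw [hc, lt_div_iff₀ (hAq i)] at hεc
        linarith
      calc ε ^ (p-1) * ε * A i ^ q = (ε ^ (p-1) * A i ^ q) * ε := by ring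
        _ < (w m ^ (p-1) * A m ^ q) * ε := by
            exact mul_lt_mul_of_pos_right this hε0
        _ = ε * (w m ^ (p-1) * A m ^ q) := by ring
    have hb' : (w m - ε) ^ p * A m ^ q ≤ w m ^ (p-1) * (w m - ε) * A m ^ q :=
      mul_le_mul_of_nonneg_right hb (hAq m).le
    nlinarith [hAq m, hws]
  set v := Function.update (Function.update w m (w m - ε)) i ε with hv
  have hvn : ∀ l, 0 ≤ v l := by
    intro l
    rcases eq_or_ne l i with rfl | h1
    · simp [hv, hε0.le]
    · rcases eq_or_ne l m with rfl | h2
      · simp [hv, h1, hεm.le, sub_nonneg]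
      · simp [hv, h1, h2, hw l]
  have hsum : ∑ l, v l = ∑ l, w l := by
    rw [hv, sum_update_update w him]; rw [hwi]; ring
  have hpen : (fun l => (v l ^ (1/k) * A l) ^ q)
      = Function.update (Function.update (fun l => (w l ^ (1/k) * A l) ^ q) m
          (((w m - ε) ^ (1/k) * A m) ^ q)) i ((ε ^ (1/k) * A i) ^ q) := by
    funext l
    rcases eq_or_ne l i with rfl | h1
    · simp [hv]
    · rcases eq_or_ne l m with rfl | h2
      · simp [hv, h1]
      · simp [hv, h1, h2]
  have hpsum : ∑ l, (v l ^ (1/k) * A l) ^ q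
      = ∑ l, (w l ^ (1/k) * A l) ^ q - (w i ^ (1/k) * A i) ^ q
        - (w m ^ (1/k) * A m) ^ q + (ε ^ (1/k) * A i) ^ q
        + ((w m - ε) ^ (1/k) * A m) ^ q := by
    calc ∑ l, (v l ^ (1/k) * A l) ^ q
        = ∑ l, (fun l => (v l ^ (1/k) * A l) ^ q) l := rfl
      _ = _ := by rw [hpen, sum_update_update _ him]
  have hzero : (w i ^ (1/k) * A i) ^ q = 0 := by
    rw [hwi, Real.zero_rpow (by positivity : (1:ℝ)/k ≠ 0), zero_mul,
      Real.zero_rpow hq.ne']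
  have hlt : ∑ l, (v l ^ (1/k) * A l) ^ q < ∑ l, (w l ^ (1/k) * A l) ^ q := by
    rw [hpsum, hzero, hterm m (w m) hwm.le, hterm i ε hε0.le,
      hterm m (w m - ε) (by linarith)]
    linarith [key]
  have := hmin v hvn
  rw [hsum] at this
  have hlq : 0 < lam / q := div_pos hlam hq
  nlinarith [this, hlt]
end

section
/- Let w* be any global minimizer of the overall loss L over the nonnegative orthant. Then for all indices i, j, if A_i < A_j then w*_i ≥ w*_j; that is, at a global minimum the weights are (weakly) monotonically decreasing in the parameter norms, so more efficient circuits never receive less weight than less efficient circuits. -/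
open Real Finset

/-! If `w i < w j` while `A i < A j`, swapping the two weights leaves `∑ w`, hence the training
loss, unchanged, but the penalty `∑ (w l ^ (1 / k)) ^ q * A l ^ q` strictly drops: by the
two-term rearrangement inequality, pairing the larger weight with the smaller norm is cheaper. -/

theorem sum_mul_comp_swap_lt {ι : Type*} [Fintype ι] [DecidableEq ι] (g h : ι → ℝ) {i j : ι}
    (hg : g i < g j) (hh : h i < h j) :
    ∑ l, g (Equiv.swap i j l) * h l < ∑ l, g l * h l := by
  have hij : i ≠ j := fun hij => hg.ne (by rw [hij])
  have hdiff : ∑ l, (g (Equiv.swap i j l) * h l - g l * h l) =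
      (g j * h i - g i * h i) + (g i * h j - g j * h j) := by
    rw [Fintype.sum_eq_add i j hij fun l hl => by
      rw [Equiv.swap_apply_of_ne_of_ne hl.1 hl.2, sub_self], Equiv.swap_apply_left,
      Equiv.swap_apply_right]
  rw [sum_sub_distrib] at hdiff
  linarith [mul_add_mul_lt_mul_add_mul hg hh]

theorem minimizer_weights_antitone_in_norms_general
    {n : ℕ} (A : Fin n → ℝ) (hA : ∀ i, 0 < A i)
    (lam q k : ℝ) (hlam : 0 < lam) (hq : 0 < q) (hk : 0 < k)
    (T : ℝ → ℝ)
    (w : Fin n → ℝ) (hw : ∀ i, 0 ≤ w i)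
    (hmin : ∀ v : Fin n → ℝ, (∀ i, 0 ≤ v i) →
      T (∑ i, w i) + (lam / q) * ∑ i, ((w i) ^ (1 / k) * A i) ^ q ≤
        T (∑ i, v i) + (lam / q) * ∑ i, ((v i) ^ (1 / k) * A i) ^ q) :
    ∀ i j, A i < A j → w i ≥ w j := by
  intro i j hAij
  by_contra! hwij
  have penalty_eq (v : Fin n → ℝ) (hv : ∀ l, 0 ≤ v l) :
      ∑ l, (v l ^ (1 / k) * A l) ^ q = ∑ l, (v l ^ (1 / k)) ^ q * A l ^ q :=
    sum_congr rfl fun l _ => mul_rpow (rpow_nonneg (hv l) _) (hA l).le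
  have hpenalty : ∑ l, (w (Equiv.swap i j l) ^ (1 / k) * A l) ^ q <
      ∑ l, (w l ^ (1 / k) * A l) ^ q := by
    rw [penalty_eq _ fun l => hw _, penalty_eq w hw]
    refine sum_mul_comp_swap_lt (fun l => (w l ^ (1 / k)) ^ q) (fun l => A l ^ q) ?_ ?_
    · exact rpow_lt_rpow (rpow_nonneg (hw i) _) (rpow_lt_rpow (hw i) hwij (by positivity)) hq
    · exact rpow_lt_rpow (hA i).le hAij hq
  have hle := hmin (w ∘ Equiv.swap i j) fun l => hw _
  rw [Function.comp_def, Equiv.sum_comp (Equiv.swap i j) w] at hle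
  have := mul_lt_mul_of_pos_left hpenalty (div_pos hlam hq)
  linarith

/-- At any global minimizer `w` over the nonnegative orthant of the
overall loss `L w = T (∑ i, w i) + (lam / q) * ∑ i, ((w i)^(1/k) * A i)^q`, the weights
are weakly monotonically decreasing in the parameter norms: `A i < A j → w i ≥ w j`. -/
theorem minimizer_weights_antitone_in_norms
    {n : ℕ} (hn : 1 ≤ n) (A : Fin n → ℝ) (hA : ∀ i, 0 < A i)
    (lam q k : ℝ) (hlam : 0 < lam) (hq : 0 < q) (hk : 0 < k)
    (T : ℝ → ℝ)
    (w : Fin n → ℝ) (hw : ∀ i, 0 ≤ w i)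
    (hmin : ∀ v : Fin n → ℝ, (∀ i, 0 ≤ v i) →
      T (∑ i, w i) + (lam / q) * ∑ i, ((w i) ^ (1 / k) * A i) ^ q ≤
        T (∑ i, v i) + (lam / q) * ∑ i, ((v i) ^ (1 / k) * A i) ^ q) :
    ∀ i j, A i < A j → w i ≥ w j :=
  minimizer_weights_antitone_in_norms_general A hA lam q k hlam hq hk T w hw hmin
end

section
/- Let q and k be real numbers with 0 < k < q, let x > 0, and let N and N' be positive real numbers. Then there exists ε with 0 < ε < x such that N^q · x^{q/k} − N^q · (x − ε)^{q/k} − ε^{q/k} · N'^q > 0. -/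
open Real

/-- Bernoulli-type lower bound: for `0 < b ≤ a` and `1 ≤ p`,
`b^p + p*(a-b)*b^(p-1) ≤ a^p`. -/
lemma rpow_bernoulli_aux {a b p : ℝ} (hb : 0 < b) (hba : b ≤ a) (hp : 1 ≤ p) :
    b ^ p + p * (a - b) * b ^ (p - 1) ≤ a ^ p := by
  have hs : (0:ℝ) ≤ (a - b) / b := div_nonneg (by linarith) hb.le
  have hbern := one_add_mul_self_le_rpow_one_add (by linarith : (-1:ℝ) ≤ (a-b)/b) hp
  have ha : a = b * (1 + (a - b) / b) := by field_simp; ring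
  calc b ^ p + p * (a - b) * b ^ (p - 1)
      = b ^ p * (1 + p * ((a - b) / b)) := by
        rw [mul_add, mul_one]
        have : b ^ p = b ^ (p - 1) * b := by
          rw [← Real.rpow_add_one hb.ne']; ring_nf
        rw [this]
        field_simp
    _ ≤ b ^ p * (1 + (a - b) / b) ^ p := by
        apply mul_le_mul_of_nonneg_left hbern (Real.rpow_nonneg hb.le p)
    _ = a ^ p := by
        rw [← Real.mul_rpow hb.le (by linarith)]
        rw [← ha]

/-- For real `0 < k < q`, `x > 0`, and positive `N`, `N'`, there exists
`0 < ε < x` with `N^q · x^(q/k) − N^q · (x − ε)^(q/k) − ε^(q/k) · N'^q > 0`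
(real powers, `rpow`). -/
theorem small_weight_transfer_decreases_penalty
    (q k x N N' : ℝ) (hk : 0 < k) (hkq : k < q) (hx : 0 < x)
    (hN : 0 < N) (hN' : 0 < N') :
    ∃ ε : ℝ, 0 < ε ∧ ε < x ∧
      N ^ q * x ^ (q / k) - N ^ q * (x - ε) ^ (q / k) - ε ^ (q / k) * N' ^ q > 0 := by
  set p := q / k with hpdef
  have hp : 1 < p := (one_lt_div hk).mpr hkq
  have hp1 : 0 < p - 1 := by linarith
  set C : ℝ := p * N ^ q * (x / 2) ^ (p - 1) / N' ^ q with hCdef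
  have hC : 0 < C := by
    apply div_pos
    · have := Real.rpow_pos_of_pos (by linarith : (0:ℝ) < x/2) (p - 1)
      have hNq := Real.rpow_pos_of_pos hN q
      positivity
    · exact Real.rpow_pos_of_pos hN' q
  set ε : ℝ := min (x / 2) ((C / 2) ^ (p - 1)⁻¹) with hεdef
  have hε0 : 0 < ε := lt_min (by linarith) (Real.rpow_pos_of_pos (by linarith) _)
  have hεx2 : ε ≤ x / 2 := min_le_left _ _
  have hεx : ε < x := lt_of_le_of_lt hεx2 (by linarith)
  refine ⟨ε, hε0, hεx, ?_⟩
  have hxe : x / 2 ≤ x - ε := by linarith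
  have hxe0 : 0 < x - ε := by linarith
  -- Bernoulli bound: (x-ε)^p + p*ε*(x-ε)^(p-1) ≤ x^p
  have hbern := rpow_bernoulli_aux hxe0 (by linarith : x - ε ≤ x) hp.le
  have hsub : x - (x - ε) = ε := by ring
  rw [hsub] at hbern
  -- (x/2)^(p-1) ≤ (x-ε)^(p-1)
  have hmono : (x / 2) ^ (p - 1) ≤ (x - ε) ^ (p - 1) :=
    Real.rpow_le_rpow (by linarith) hxe (by linarith)
  -- ε^(p-1) < C
  have hεpow : ε ^ (p - 1) < C := by
    have h1 : ε ^ (p - 1) ≤ ((C / 2) ^ (p - 1)⁻¹) ^ (p - 1) :=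
      Real.rpow_le_rpow hε0.le (min_le_right _ _) hp1.le
    have h2 : ((C / 2) ^ (p - 1)⁻¹) ^ (p - 1) = C / 2 :=
      Real.rpow_inv_rpow (by linarith) hp1.ne'
    calc ε ^ (p - 1) ≤ C / 2 := h2 ▸ h1
      _ < C := by linarith
  -- key: ε^p * N'^q < N^q * p * ε * (x/2)^(p-1)
  have hN'q : 0 < N' ^ q := Real.rpow_pos_of_pos hN' q
  have hNq : 0 < N ^ q := Real.rpow_pos_of_pos hN q
  have hεp : ε ^ p = ε * ε ^ (p - 1) := by
    nth_rewrite 1 [show p = 1 + (p - 1) by ring]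
    rw [Real.rpow_one_add' hε0.le (by linarith)]
  have hkey : ε ^ p * N' ^ q < N ^ q * (p * ε * (x / 2) ^ (p - 1)) := by
    rw [hεp]
    have := (mul_lt_mul_iff_right₀ hε0).mpr ((mul_lt_mul_iff_left₀ hN'q).mpr hεpow)
    calc ε * ε ^ (p - 1) * N' ^ q = ε * (ε ^ (p - 1) * N' ^ q) := by ring
      _ < ε * (C * N' ^ q) := this
      _ = N ^ q * (p * ε * (x / 2) ^ (p - 1)) := by
          rw [hCdef]; field_simp
  have hb2 : N ^ q * ((x - ε) ^ p + p * ε * (x - ε) ^ (p - 1)) ≤ N ^ q * x ^ p :=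
    mul_le_mul_of_nonneg_left hbern hNq.le
  have hm2 : N ^ q * (p * ε * (x / 2) ^ (p - 1)) ≤ N ^ q * (p * ε * (x - ε) ^ (p - 1)) := by
    apply mul_le_mul_of_nonneg_left _ hNq.le
    apply mul_le_mul_of_nonneg_left hmono
    positivity
  nlinarith [hb2, hm2, hkey]
end
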